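/- Let p, q ≥ 0 with p + q > 0, let t ≥ 0, let φ : ℝ → ℝ be Lebesgue integrable and let f : ℝ → ℝ be bounded and continuous. Then ∫_{−∞}^∞ (C_{p,q}(t)φ)(x)·f(x) dx = ∫_{−∞}^∞ φ(x)·(C*(t)f)(x) dx; that is, C*(t) is the adjoint of C_{p,q}(t). -/

import Mathlib

open MeasureTheory Real Filter

/-- The dual cosine family `C*(t)` (extended to all real `t` by `C*(t) = C*(-t)`). -/
noncomputable def Cstar (p q t : ℝ) (f : ℝ → ℝ) : ℝ → ℝ := fun x =>
  if |t| ≤ |x| then (f (x + |t|) + f (x - |t|)) / 2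
  else if x ≤ 0 then
    (f (x + |t|) + f (x - |t|)) / 2 + (q - p) / (2 * (p + q)) * (f (-x - |t|) - f (x + |t|))
  else
    (f (x + |t|) + f (x - |t|)) / 2 + (p - q) / (2 * (p + q)) * (f (|t| - x) - f (x - |t|))

/-- The cosine family `C_{p,q}(t)` acting on integrable functions (for `t ≥ 0`). -/
noncomputable def Cpq (p q t : ℝ) (φ : ℝ → ℝ) : ℝ → ℝ := fun x =>
  if t < |x| then (φ (x + t) + φ (x - t)) / 2
  else if x < 0 then
    (φ (x + t) + φ (x - t)) / 2 + (q - p) / (2 * (p + q)) * (φ (-x - t) + φ (x + t))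
  else
    (φ (x + t) + φ (x - t)) / 2 + (p - q) / (2 * (p + q)) * (φ (t - x) + φ (x - t))

/-!
Off the null set `{-t, 0, t}`, `C_{p,q}(t) φ` is a sum of four translates and reflections
`ψ₁ (x + t) + ψ₂ (x - t) + ψ₃ (-t - x) + ψ₄ (t - x)` of integrable functions `ψᵢ` (multiples of
`φ` by step functions), and `φ · C*(t) f` is, almost everywhere, the matching sum
`ψ₁ · f (· - t) + ψ₂ · f (· + t) + ψ₃ · f (-t - ·) + ψ₄ · f (t - ·)`. The two integrals then
agree term by term by the translation and reflection invariance of Lebesgue measure.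
-/

open Set

section ChangeOfVariables

variable {G : Type*} [AddCommGroup G] [MeasurableSpace G] [MeasurableAdd G] {μ : Measure G}

theorem integral_comp_add_right_mul [μ.IsAddRightInvariant] (ψ g : G → ℝ) (a : G) :
    ∫ x, ψ (x + a) * g x ∂μ = ∫ y, ψ y * g (y - a) ∂μ := by
  simpa using integral_add_right_eq_self (μ := μ) (fun y => ψ y * g (y - a)) a

theorem integral_comp_sub_right_mul [μ.IsAddRightInvariant] (ψ g : G → ℝ) (a : G) :
    ∫ x, ψ (x - a) * g x ∂μ = ∫ y, ψ y * g (y + a) ∂μ := by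
  simpa using integral_sub_right_eq_self (μ := μ) (fun y => ψ y * g (y + a)) a

theorem integral_comp_sub_left_mul [MeasurableNeg G] [μ.IsAddLeftInvariant] [μ.IsNegInvariant]
    (ψ g : G → ℝ) (a : G) :
    ∫ x, ψ (a - x) * g x ∂μ = ∫ y, ψ y * g (a - y) ∂μ := by
  simpa using integral_sub_left_eq_self (fun y => ψ y * g (a - y)) μ a

theorem integral_translates_reflections_mul [MeasurableNeg G] [μ.IsAddRightInvariant]
    [μ.IsAddLeftInvariant] [μ.IsNegInvariant] {ψ₁ ψ₂ ψ₃ ψ₄ g : G → ℝ} {M : ℝ}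
    (h₁ : Integrable ψ₁ μ) (h₂ : Integrable ψ₂ μ) (h₃ : Integrable ψ₃ μ) (h₄ : Integrable ψ₄ μ)
    (hg : Measurable g) (hgM : ∀ y, |g y| ≤ M) (a b c : G) :
    ∫ x, (ψ₁ (x + a) + ψ₂ (x - a) + ψ₃ (b - x) + ψ₄ (c - x)) * g x ∂μ =
      ∫ y, ψ₁ y * g (y - a) + ψ₂ y * g (y + a) + ψ₃ y * g (b - y) + ψ₄ y * g (c - y) ∂μ := by
  have hmul : ∀ ψ : G → ℝ, Integrable ψ μ → ∀ ρ : G → G, Measurable ρ →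
      Integrable (fun x => ψ x * g (ρ x)) μ := fun ψ hψ ρ hρ =>
    hψ.mul_bdd (hg.comp hρ).aestronglyMeasurable (Eventually.of_forall fun x => hgM (ρ x))
  have i₁ : Integrable (fun x => ψ₁ (x + a) * g x) μ :=
    hmul _ (h₁.comp_add_right a) id measurable_id
  have i₂ : Integrable (fun x => ψ₂ (x - a) * g x) μ :=
    hmul _ (h₂.comp_sub_right a) id measurable_id
  have i₃ : Integrable (fun x => ψ₃ (b - x) * g x) μ :=
    hmul _ (h₃.comp_sub_left b) id measurable_id
  have i₄ : Integrable (fun x => ψ₄ (c - x) * g x) μ :=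
    hmul _ (h₄.comp_sub_left c) id measurable_id
  have j₁ := hmul _ h₁ _ (measurable_sub_const a)
  have j₂ := hmul _ h₂ _ (measurable_add_const a)
  have j₃ := hmul _ h₃ _ (measurable_const_sub b)
  have j₄ := hmul _ h₄ _ (measurable_const_sub c)
  simp only [add_mul]
  rw [integral_add (by fun_prop) i₄, integral_add (by fun_prop) i₃, integral_add i₁ i₂,
    integral_add (by fun_prop) j₄, integral_add (by fun_prop) j₃, integral_add j₁ j₂,
    integral_comp_add_right_mul, integral_comp_sub_right_mul, integral_comp_sub_left_mul,
    integral_comp_sub_left_mul]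

end ChangeOfVariables

/-- With `(a, b) = (p, q)` on `s = (-t, 0)` and `(a, b) = (q, p)` on `s = (0, t)`, the factor
`(b - a) / (2 (a + b))` is the coefficient with which `Cpq` adds the reflected values of `φ`. -/
noncomputable def reflectedPart (a b : ℝ) (s : Set ℝ) (φ : ℝ → ℝ) : ℝ → ℝ :=
  s.indicator fun y => (b - a) / (2 * (a + b)) * φ y

theorem integrable_reflectedPart {φ : ℝ → ℝ} (hφ : Integrable φ) (a b : ℝ) {s : Set ℝ}
    (hs : MeasurableSet s) : Integrable (reflectedPart a b s φ) :=
  (hφ.const_mul _).indicator hs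

theorem Cpq_mul_ae_eq (p q t : ℝ) (φ g : ℝ → ℝ) :
    (fun x => Cpq p q t φ x * g x) =ᵐ[volume] fun x =>
      ((φ (x + t) / 2 - reflectedPart q p (Ioo 0 t) φ (x + t)) +
        (φ (x - t) / 2 - reflectedPart p q (Ioo (-t) 0) φ (x - t)) +
        reflectedPart p q (Ioo (-t) 0) φ (-t - x) +
        reflectedPart q p (Ioo 0 t) φ (t - x)) * g x := by
  filter_upwards [(toFinite {-t, 0, t}).countable.ae_notMem volume] with x hx
  simp only [mem_insert_iff, mem_singleton_iff, not_or] at hx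
  unfold Cpq reflectedPart
  simp only [indicator_apply, mem_Ioo, add_comm q p, neg_sub_comm x t]
  split_ifs <;> grind

theorem mul_Cstar_ae_eq {t : ℝ} (ht : 0 ≤ t) (p q : ℝ) (φ f : ℝ → ℝ) :
    (fun x => φ x * Cstar p q t f x) =ᵐ[volume] fun x =>
      (φ x / 2 - reflectedPart q p (Ioo 0 t) φ x) * f (x - t) +
        (φ x / 2 - reflectedPart p q (Ioo (-t) 0) φ x) * f (x + t) +
        reflectedPart p q (Ioo (-t) 0) φ x * f (-t - x) +
        reflectedPart q p (Ioo 0 t) φ x * f (t - x) := by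
  filter_upwards [(countable_singleton (0 : ℝ)).ae_notMem volume] with x hx
  rw [mem_singleton_iff] at hx
  unfold Cstar reflectedPart
  simp only [indicator_apply, mem_Ioo, add_comm q p, abs_of_nonneg ht]
  split_ifs <;> grind

theorem stmt19_general (p q : ℝ)
    (t : ℝ) (ht : 0 ≤ t)
    (φ : ℝ → ℝ) (hφ : MeasureTheory.Integrable φ)
    (f : ℝ → ℝ) (hf : Continuous f) (hb : ∃ M, ∀ y, |f y| ≤ M) :
    ∫ x : ℝ, Cpq p q t φ x * f x = ∫ x : ℝ, φ x * Cstar p q t f x := by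
  obtain ⟨M, hM⟩ := hb
  have hU : Integrable (reflectedPart p q (Ioo (-t) 0) φ) :=
    integrable_reflectedPart hφ p q measurableSet_Ioo
  have hV : Integrable (reflectedPart q p (Ioo 0 t) φ) :=
    integrable_reflectedPart hφ q p measurableSet_Ioo
  rw [integral_congr_ae (Cpq_mul_ae_eq p q t φ f), integral_congr_ae (mul_Cstar_ae_eq ht p q φ f)]
  exact integral_translates_reflections_mul ((hφ.div_const 2).sub hV) ((hφ.div_const 2).sub hU)
    hU hV hf.measurable hM t (-t) t

theorem stmt19 (p q : ℝ) (hp : 0 ≤ p) (hq : 0 ≤ q) (hpq : 0 < p + q)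
    (t : ℝ) (ht : 0 ≤ t)
    (φ : ℝ → ℝ) (hφ : MeasureTheory.Integrable φ)
    (f : ℝ → ℝ) (hf : Continuous f) (hb : ∃ M, ∀ y, |f y| ≤ M) :
    ∫ x : ℝ, Cpq p q t φ x * f x = ∫ x : ℝ, φ x * Cstar p q t f x :=
  stmt19_general p q t ht φ hφ f hf hb
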